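/- arXiv:2103.04416 — 2 statements merged into one kernel-verified Lean document; each statement's English description precedes it below -/
import Mathlib

section
/- For the learning rates α_t = (H+1)/(H+t) with H ≥ 1 and weights α_t^i := α_i · ∏_{j=i+1}^t (1 − α_j), for every t ≥ 1 the maximum weight satisfies max_{1 ≤ i ≤ t} α_t^i ≤ 2H/t. -/
open Finset

noncomputable def lr (H : ℕ) (t : ℕ) : ℝ := ((H : ℝ) + 1) / ((H : ℝ) + t)

noncomputable def w (H : ℕ) (t i : ℕ) : ℝ :=
  lr H i * ∏ j ∈ Finset.Icc (i + 1) t, (1 - lr H j)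

noncomputable def w0 (H : ℕ) (t : ℕ) : ℝ :=
  ∏ j ∈ Finset.Icc 1 t, (1 - lr H j)

/-! Every weight `α_t^i` is at most the current rate `α_t`: appending the factor `1 - α_{t+1}`
to a weight bounded by `α_t` gives at most `α_t (1 - α_{t+1}) = α_{t+1} · t / (H + t) ≤ α_{t+1}`.
Finally `α_t = (H + 1) / (H + t) ≤ 2H / t` as soon as `H ≥ 1`. -/

theorem mul_prod_one_sub_le {a : ℕ → ℝ} {i : ℕ} (h_le_one : ∀ j, i < j → a j ≤ 1)
    (h_step : ∀ n, i ≤ n → a n * (1 - a (n + 1)) ≤ a (n + 1)) {t : ℕ} (hit : i ≤ t) :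
    a i * ∏ j ∈ Icc (i + 1) t, (1 - a j) ≤ a t := by
  induction t, hit using Nat.le_induction with
  | base => simp
  | succ n hin ih =>
    rw [prod_Icc_succ_top (by omega), ← mul_assoc]
    calc (a i * ∏ j ∈ Icc (i + 1) n, (1 - a j)) * (1 - a (n + 1))
        ≤ a n * (1 - a (n + 1)) :=
          mul_le_mul_of_nonneg_right ih (sub_nonneg.mpr (h_le_one (n + 1) (by omega)))
      _ ≤ a (n + 1) := h_step n hin

theorem lr_le_one (H : ℕ) {j : ℕ} (hj : 1 ≤ j) : lr H j ≤ 1 :=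
  div_le_one_of_le₀ (by gcongr; exact_mod_cast hj) (by positivity)

theorem one_sub_lr_succ (H n : ℕ) : 1 - lr H (n + 1) = n / ((H : ℝ) + (n + 1 : ℕ)) := by
  unfold lr
  rw [one_sub_div (by positivity)]
  push_cast
  ring

theorem lr_mul_one_sub_lr_succ_le (H n : ℕ) : lr H n * (1 - lr H (n + 1)) ≤ lr H (n + 1) := by
  have h_frac : (n : ℝ) / ((H : ℝ) + n) ≤ 1 :=
    div_le_one_of_le₀ (le_add_of_nonneg_left H.cast_nonneg) (by positivity)
  calc lr H n * (1 - lr H (n + 1)) = lr H (n + 1) * ((n : ℝ) / ((H : ℝ) + n)) := by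
        rw [one_sub_lr_succ]; unfold lr; ring
    _ ≤ lr H (n + 1) * 1 := by gcongr; unfold lr; positivity
    _ = lr H (n + 1) := mul_one _

theorem w_le_lr (H : ℕ) {t i : ℕ} (hit : i ≤ t) : w H t i ≤ lr H t :=
  mul_prod_one_sub_le (fun _ hj ↦ lr_le_one H (by omega))
    (fun n _ ↦ lr_mul_one_sub_lr_succ_le H n) hit

theorem lr_le_two_mul_div (H : ℕ) (hH : 1 ≤ H) {t : ℕ} (ht : 1 ≤ t) :
    lr H t ≤ 2 * (H : ℝ) / t := by
  have hH' : (1 : ℝ) ≤ H := by exact_mod_cast hH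
  have ht' : (1 : ℝ) ≤ t := by exact_mod_cast ht
  unfold lr
  rw [div_le_div_iff₀ (by positivity) (by positivity)]
  nlinarith

theorem max_weight_le_general (H : ℕ) (hH : 1 ≤ H) (t : ℕ) :
    ∀ i ∈ Finset.Icc 1 t, w H t i ≤ 2 * (H : ℝ) / t := by
  intro i hi
  obtain ⟨hi1, hit⟩ := mem_Icc.mp hi
  exact (w_le_lr H hit).trans (lr_le_two_mul_div H hH (hi1.trans hit))

theorem max_weight_le (H : ℕ) (hH : 1 ≤ H) (t : ℕ) (ht : 1 ≤ t) :
    ∀ i ∈ Finset.Icc 1 t, w H t i ≤ 2 * (H : ℝ) / t :=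
  max_weight_le_general H hH t
end

section
/- For the learning rates α_t = (H+1)/(H+t) with H ≥ 1 and weights α_t^i := α_i · ∏_{j=i+1}^t (1 − α_j), for every t ≥ 1 the sum of squared weights satisfies ∑_{i=1}^t (α_t^i)^2 ≤ 2H/t. -/
/-! The weights are nonnegative, sum to `1 - w0 H t ≤ 1`, and increase in `i`, so each is at most
`w H t t = α_t ≤ 2H/t`; then `∑ (α_t^i)² ≤ max_i α_t^i · ∑ α_t^i ≤ 2H/t`. -/

open Finset

theorem Finset.sum_mul_prod_Icc_one_sub {R : Type*} [CommRing R] (a : ℕ → R) (t : ℕ) :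
    ∑ i ∈ Icc 1 t, a i * ∏ j ∈ Icc (i + 1) t, (1 - a j) = 1 - ∏ j ∈ Icc 1 t, (1 - a j) := by
  induction t with
  | zero => simp
  | succ t ih =>
    have hsplit : ∀ i ∈ Icc 1 t, a i * ∏ j ∈ Icc (i + 1) (t + 1), (1 - a j) =
        a i * (∏ j ∈ Icc (i + 1) t, (1 - a j)) * (1 - a (t + 1)) := fun i hi => by
      rw [prod_Icc_succ_top (by grind), mul_assoc]
    rw [sum_Icc_succ_top (by omega), sum_congr rfl hsplit, ← sum_mul, ih,
      Icc_eq_empty (by omega : ¬t + 1 + 1 ≤ t + 1), prod_empty, prod_Icc_succ_top (by omega)]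
    ring

theorem sum_w_eq_one_sub_w0 (H t : ℕ) : ∑ i ∈ Icc 1 t, w H t i = 1 - w0 H t :=
  sum_mul_prod_Icc_one_sub (lr H) t

theorem lr_nonneg (H t : ℕ) : 0 ≤ lr H t := by
  unfold lr
  positivity

theorem one_sub_lr_nonneg (H : ℕ) {j : ℕ} (hj : 1 ≤ j) : 0 ≤ 1 - lr H j := by
  have hj' : (1 : ℝ) ≤ j := by exact_mod_cast hj
  rw [sub_nonneg, lr, div_le_one (by positivity)]
  linarith

theorem w0_nonneg (H t : ℕ) : 0 ≤ w0 H t :=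
  prod_nonneg fun _ hj => one_sub_lr_nonneg H (mem_Icc.mp hj).1

theorem sum_w_le_one (H t : ℕ) : ∑ i ∈ Icc 1 t, w H t i ≤ 1 := by
  rw [sum_w_eq_one_sub_w0]
  linarith [w0_nonneg H t]

theorem w_nonneg (H t i : ℕ) : 0 ≤ w H t i :=
  mul_nonneg (lr_nonneg H i) (prod_nonneg fun _ hj => one_sub_lr_nonneg H (by grind))

theorem w_self (H t : ℕ) : w H t t = lr H t := by
  simp [w]

theorem lr_mul_one_sub_lr_succ (H i : ℕ) :
    lr H i * (1 - lr H (i + 1)) = (i / (H + i) : ℝ) * lr H (i + 1) := by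
  have h : (H : ℝ) + (i + 1 : ℕ) ≠ 0 := by positivity
  simp only [lr] at h ⊢
  field_simp
  push_cast
  ring

theorem w_eq_mul_w_succ (H : ℕ) {t i : ℕ} (hit : i < t) :
    w H t i = (i / (H + i) : ℝ) * w H t (i + 1) := by
  rw [w, w, ← insert_Icc_add_one_left_eq_Icc (by omega : i + 1 ≤ t), prod_insert (by simp),
    ← mul_assoc, lr_mul_one_sub_lr_succ, mul_assoc]

theorem w_le_w_succ (H : ℕ) {t i : ℕ} (hit : i < t) : w H t i ≤ w H t (i + 1) := by
  rw [w_eq_mul_w_succ H hit]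
  exact mul_le_of_le_one_left (w_nonneg H t _) <|
    div_le_one_of_le₀ (le_add_of_nonneg_left (by positivity)) (by positivity)

theorem monotoneOn_w (H t : ℕ) : MonotoneOn (w H t) (Set.Iic t) :=
  monotoneOn_of_le_succ Set.ordConnected_Iic fun _ _ _ hi =>
    w_le_w_succ H (Order.succ_le_iff.1 hi)

theorem Finset.sum_sq_le_of_le_of_sum_le_one {ι R : Type*} [CommRing R] [LinearOrder R]
    [IsStrictOrderedRing R] {s : Finset ι} {f : ι → R} {c : R} (hf : ∀ i ∈ s, 0 ≤ f i)
    (hfc : ∀ i ∈ s, f i ≤ c) (hs : ∑ i ∈ s, f i ≤ 1) (hc : 0 ≤ c) : ∑ i ∈ s, f i ^ 2 ≤ c :=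
  calc ∑ i ∈ s, f i ^ 2 ≤ ∑ i ∈ s, c * f i :=
        sum_le_sum fun i hi => by rw [sq]; exact mul_le_mul_of_nonneg_right (hfc i hi) (hf i hi)
    _ = c * ∑ i ∈ s, f i := (mul_sum s f c).symm
    _ ≤ c := mul_le_of_le_one_right hc hs

theorem sum_sq_weights_le_general (H : ℕ) (hH : 1 ≤ H) (t : ℕ) :
    ∑ i ∈ Finset.Icc 1 t, (w H t i) ^ 2 ≤ 2 * (H : ℝ) / t := by
  refine sum_sq_le_of_le_of_sum_le_one (fun i _ => w_nonneg H t i) ?_ (sum_w_le_one H t)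
    (by positivity)
  intro i hi
  obtain ⟨hi1, hit⟩ := mem_Icc.mp hi
  exact (w_le_lr H hit).trans (lr_le_two_mul_div H hH (hi1.trans hit))

theorem sum_sq_weights_le (H : ℕ) (hH : 1 ≤ H) (t : ℕ) (ht : 1 ≤ t) :
    ∑ i ∈ Finset.Icc 1 t, (w H t i) ^ 2 ≤ 2 * (H : ℝ) / t :=
  sum_sq_weights_le_general H hH t
end
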